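/- arXiv:2409.05070 — 3 statements merged into one kernel-verified Lean document; each statement's English description precedes it below -/
import Mathlib

section
/- Let H and K be real separable Hilbert spaces, A : H → H a positive bounded linear operator, V : K → H a partial isometry, and B : K → K a bounded linear operator. Then for all exponents 0 ≤ r ≤ 1/2 and 0 ≤ s ≤ 1/2 one has ‖A^r V B V^* A^s‖ ≤ ‖(V^* A V)^r B (V^* A V)^s‖. -/
open ContinuousLinearMap

/-- `p` is the family of real powers `t ↦ A ^ t` (for `t ≥ 0`) of the positive operator `A`,
given by the continuous functional calculus; it is characterized by the semigroup property
together with positivity, continuity, `p 0 = 1` and `p 1 = A`. -/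
def IsPowerFamilyOf {E : Type*} [NormedAddCommGroup E] [InnerProductSpace ℝ E]
    [CompleteSpace E] (A : E →L[ℝ] E) (p : ℝ → E →L[ℝ] E) : Prop :=
  p 0 = 1 ∧ p 1 = A ∧ (∀ s t : ℝ, 0 ≤ s → 0 ≤ t → p (s + t) = p s ∘L p t) ∧
    (∀ t : ℝ, 0 ≤ t → (p t).IsPositive) ∧ ContinuousOn p (Set.Ici (0 : ℝ))

/-!
Write `W = V* A V` and `T t = A ^ t V W ^ (-t)`; continuity of `t ↦ W ^ t` at `0` makes every
`W ^ t` invertible. Since `A ^ r V B V* A ^ s = T r (W ^ r B W ^ s) (T s)*`, it suffices to show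
`‖T t‖ ≤ 1` for `0 ≤ t ≤ 1/2`. This holds at `t = 0`, where `T 0 = V`, and at `t = 1/2`, where
`(T ½)* T ½ = 1`. The set where it holds is closed, and it is midpoint-convex: for
`m = (s + t) / 2` the self-adjoint operator `(T m)* T m` factors as `XY` with `YX = T t (T s)*`,
and the norm of a self-adjoint operator is controlled by the growth of its powers, which
`(XY) ^ (n + 1) = X (YX) ^ n Y` bounds through `‖YX‖`.
-/

open Filter Set Topology

theorem Set.Icc_subset_of_isClosed_of_add_div_two_mem {S : Set ℝ} (hS : IsClosed S) {a b : ℝ}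
    (ha : a ∈ S) (hb : b ∈ S) (hmid : ∀ x ∈ S, ∀ y ∈ S, (x + y) / 2 ∈ S) : Icc a b ⊆ S := by
  rintro x ⟨hax, hxb⟩
  have bisect : ∀ n : ℕ, ∃ l ∈ S, ∃ u ∈ S, l ≤ x ∧ x ≤ u ∧ u - l = (b - a) * (1 / 2) ^ n := by
    intro n
    induction n with
    | zero => exact ⟨a, ha, b, hb, hax, hxb, by ring⟩
    | succ n ih =>
      obtain ⟨l, hl, u, hu, hlx, hxu, hlu⟩ := ih
      rcases le_total x ((l + u) / 2) with hx | hx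
      · exact ⟨l, hl, _, hmid l hl u hu, hlx, hx, by rw [pow_succ]; linarith⟩
      · exact ⟨_, hmid l hl u hu, u, hu, hx, hxu, by rw [pow_succ]; linarith⟩
  rw [← hS.closure_eq, Metric.mem_closure_iff]
  intro ε hε
  have hsmall : Tendsto (fun n : ℕ => (b - a) * (1 / 2) ^ n) atTop (𝓝 0) := by
    simpa using (tendsto_pow_atTop_nhds_zero_of_lt_one (by norm_num : (0 : ℝ) ≤ 1 / 2)
      (by norm_num)).const_mul (b - a)
  obtain ⟨n, hn⟩ := (hsmall.eventually (gt_mem_nhds hε)).exists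
  obtain ⟨l, hl, u, -, hlx, hxu, hlu⟩ := bisect n
  exact ⟨l, hl, by rw [Real.dist_eq, abs_of_nonneg (by linarith)]; linarith⟩

theorem IsSelfAdjoint.norm_le_one_of_norm_pow_succ_le {E : Type*} [NormedRing E] [StarRing E]
    [CStarRing E] {x : E} (hx : IsSelfAdjoint x) {C : ℝ} (hC : ∀ n : ℕ, ‖x ^ (n + 1)‖ ≤ C) :
    ‖x‖ ≤ 1 := by
  by_contra! h
  obtain ⟨n, hn⟩ := pow_unbounded_of_one_lt C h
  have : ‖x‖ ^ n ≤ ‖x‖ ^ 2 ^ n := pow_le_pow_right₀ h.le Nat.lt_two_pow_self.le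
  have hpow := hC (2 ^ n - 1)
  rw [Nat.sub_add_cancel Nat.one_le_two_pow, hx.norm_pow_two_pow] at hpow
  linarith

theorem ContinuousLinearMap.comp_pow_succ {R M N : Type*} [Semiring R] [TopologicalSpace M]
    [AddCommMonoid M] [Module R M] [TopologicalSpace N] [AddCommMonoid N] [Module R N]
    (X : N →L[R] M) (Y : M →L[R] N) (n : ℕ) :
    (X ∘L Y) ^ (n + 1) = X ∘L ((Y ∘L X) ^ n) ∘L Y := by
  induction n with
  | zero => rfl
  | succ n ih => rw [pow_succ', ih, pow_succ']; rfl

namespace ContinuousLinearMap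

/-- The norm of a self-adjoint operator is its spectral radius, and `XY`, `YX` have the same
nonzero spectrum. -/
theorem norm_comp_le_one_of_isSelfAdjoint {𝕜 E F : Type*} [RCLike 𝕜] [NormedAddCommGroup E]
    [InnerProductSpace 𝕜 E] [CompleteSpace E] [NormedAddCommGroup F] [InnerProductSpace 𝕜 F]
    {X : F →L[𝕜] E} {Y : E →L[𝕜] F}
    (hXY : IsSelfAdjoint (X ∘L Y)) (hYX : ‖Y ∘L X‖ ≤ 1) : ‖X ∘L Y‖ ≤ 1 := by
  refine hXY.norm_le_one_of_norm_pow_succ_le (C := ‖X‖ * ‖Y‖) fun n => ?_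
  have hpow : ‖(Y ∘L X) ^ n‖ ≤ 1 := by
    rcases n with _ | n
    · exact norm_id_le
    · exact (norm_pow_le' _ n.succ_pos).trans (pow_le_one₀ (norm_nonneg _) hYX)
  rw [comp_pow_succ]
  calc ‖X ∘L ((Y ∘L X) ^ n) ∘L Y‖ ≤ ‖X‖ * (‖(Y ∘L X) ^ n‖ * ‖Y‖) :=
        (opNorm_comp_le _ _).trans (by gcongr; exact opNorm_comp_le _ _)
    _ ≤ ‖X‖ * (1 * ‖Y‖) := by gcongr
    _ = ‖X‖ * ‖Y‖ := by rw [one_mul]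

variable {𝕜 E F : Type*} [RCLike 𝕜] [NormedAddCommGroup E] [InnerProductSpace 𝕜 E]
  [CompleteSpace E] [NormedAddCommGroup F] [InnerProductSpace 𝕜 F] [CompleteSpace F]

theorem norm_le_one_of_norm_adjoint_comp_self_le_one {T : E →L[𝕜] F}
    (h : ‖adjoint T ∘L T‖ ≤ 1) : ‖T‖ ≤ 1 := by
  rw [norm_adjoint_comp_self] at h
  nlinarith [norm_nonneg T]

theorem norm_le_one_of_comp_adjoint_comp_self {V : E →L[𝕜] F} (hV : V ∘L adjoint V ∘L V = V) :
    ‖V‖ ≤ 1 := by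
  refine norm_le_one_of_norm_adjoint_comp_self_le_one (IsStarProjection.norm_le _ ⟨?_, ?_⟩)
  · change adjoint V ∘L V ∘L adjoint V ∘L V = adjoint V ∘L V
    rw [hV]
  · rw [IsSelfAdjoint, star_eq_adjoint, adjoint_comp, adjoint_adjoint]

end ContinuousLinearMap

namespace IsPowerFamilyOf

variable {E : Type*} [NormedAddCommGroup E] [InnerProductSpace ℝ E] [CompleteSpace E]
  {A : E →L[ℝ] E} {p : ℝ → E →L[ℝ] E} {s t : ℝ}

theorem map_zero (hp : IsPowerFamilyOf A p) : p 0 = 1 := hp.1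

theorem map_one (hp : IsPowerFamilyOf A p) : p 1 = A := hp.2.1

theorem map_add (hp : IsPowerFamilyOf A p) (hs : 0 ≤ s) (ht : 0 ≤ t) :
    p (s + t) = p s * p t :=
  hp.2.2.1 s t hs ht

theorem map_add_apply (hp : IsPowerFamilyOf A p) (hs : 0 ≤ s) (ht : 0 ≤ t) (x : E) :
    p (s + t) x = p s (p t x) := by
  rw [hp.map_add hs ht, mul_apply_eq_comp]

theorem map_one_half_apply_apply (hp : IsPowerFamilyOf A p) (x : E) :
    p (1 / 2) (p (1 / 2) x) = A x := by
  rw [← hp.map_add_apply (by norm_num) (by norm_num), add_halves, hp.map_one]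

theorem isSelfAdjoint (hp : IsPowerFamilyOf A p) (ht : 0 ≤ t) : IsSelfAdjoint (p t) :=
  (hp.2.2.2.1 t ht).isSelfAdjoint

theorem continuousOn (hp : IsPowerFamilyOf A p) : ContinuousOn p (Ici 0) := hp.2.2.2.2

theorem map_natCast_mul (hp : IsPowerFamilyOf A p) (ht : 0 ≤ t) (n : ℕ) :
    p (n * t) = p t ^ n := by
  induction n with
  | zero => simpa using hp.map_zero
  | succ n ih =>
    rw [Nat.cast_succ, add_one_mul, hp.map_add (by positivity) ht, ih, pow_succ]

/-- Units form a neighbourhood of `p 0 = 1`, and `p t = p (t / n) ^ n`. -/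
theorem isUnit (hp : IsPowerFamilyOf A p) (ht : 0 ≤ t) : IsUnit (p t) := by
  have hnear : ∀ᶠ u in 𝓝[≥] 0, IsUnit (p u) :=
    (hp.continuousOn 0 self_mem_Ici).eventually
      (by rw [hp.map_zero]; exact Units.isOpen.mem_nhds isUnit_one)
  have hdiv : Tendsto (fun n : ℕ => t / n) atTop (𝓝[≥] 0) :=
    tendsto_nhdsWithin_iff.mpr ⟨tendsto_const_div_atTop_nhds_zero_nat t,
      Eventually.of_forall fun n => div_nonneg ht n.cast_nonneg⟩
  obtain ⟨n, hunit, hn⟩ := ((hdiv.eventually hnear).and (eventually_ne_atTop 0)).exists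
  have ht' : t = n * (t / n) := by field_simp
  rw [ht', hp.map_natCast_mul (by positivity)]
  exact hunit.pow n

theorem inverse_apply_apply (hp : IsPowerFamilyOf A p) (ht : 0 ≤ t) (x : E) :
    Ring.inverse (p t) (p t x) = x := by
  rw [← mul_apply_eq_comp, Ring.inverse_mul_cancel _ (hp.isUnit ht), one_apply_eq_self]

theorem apply_inverse_apply (hp : IsPowerFamilyOf A p) (ht : 0 ≤ t) (x : E) :
    p t (Ring.inverse (p t) x) = x := by
  rw [← mul_apply_eq_comp, Ring.mul_inverse_cancel _ (hp.isUnit ht), one_apply_eq_self]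

theorem inverse_map_add (hp : IsPowerFamilyOf A p) (hs : 0 ≤ s) (ht : 0 ≤ t) :
    Ring.inverse (p (s + t)) = Ring.inverse (p s) * Ring.inverse (p t) := by
  have hcomm : Commute (p t) (p s) := by
    rw [Commute, SemiconjBy, ← hp.map_add ht hs, ← hp.map_add hs ht, add_comm]
  rw [add_comm, hp.map_add ht hs, Ring.mul_inverse_rev' hcomm]

theorem inverse_map_add_apply (hp : IsPowerFamilyOf A p) (hs : 0 ≤ s) (ht : 0 ≤ t) (x : E) :
    Ring.inverse (p (s + t)) x = Ring.inverse (p s) (Ring.inverse (p t) x) := by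
  rw [hp.inverse_map_add hs ht, mul_apply_eq_comp]

theorem isSelfAdjoint_inverse (hp : IsPowerFamilyOf A p) (ht : 0 ≤ t) :
    IsSelfAdjoint (Ring.inverse (p t)) := by
  rw [IsSelfAdjoint, ← Ring.inverse_star, (hp.isSelfAdjoint ht).star_eq]

theorem continuousOn_inverse (hp : IsPowerFamilyOf A p) :
    ContinuousOn (fun t => Ring.inverse (p t)) (Ici 0) := by
  intro t ht
  obtain ⟨u, hu⟩ := hp.isUnit ht
  exact (hu ▸ NormedRing.inverse_continuousAt u).comp_continuousWithinAt (hp.continuousOn t ht)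

end IsPowerFamilyOf

section Interpolation

variable {H K : Type*} [NormedAddCommGroup H] [InnerProductSpace ℝ H] [CompleteSpace H]
  [NormedAddCommGroup K] [InnerProductSpace ℝ K] [CompleteSpace K]
  {A : H →L[ℝ] H} {W : K →L[ℝ] K} {V : K →L[ℝ] H} {pA : ℝ → H →L[ℝ] H} {pW : ℝ → K →L[ℝ] K}

noncomputable def interpolant (V : K →L[ℝ] H) (pA : ℝ → H →L[ℝ] H) (pW : ℝ → K →L[ℝ] K)
    (t : ℝ) : K →L[ℝ] H :=
  pA t ∘L V ∘L Ring.inverse (pW t)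

theorem adjoint_interpolant (hpA : IsPowerFamilyOf A pA) (hpW : IsPowerFamilyOf W pW) {t : ℝ}
    (ht : 0 ≤ t) :
    adjoint (interpolant V pA pW t) = Ring.inverse (pW t) ∘L adjoint V ∘L pA t := by
  rw [interpolant, adjoint_comp, adjoint_comp, (hpA.isSelfAdjoint ht).adjoint_eq,
    (hpW.isSelfAdjoint_inverse ht).adjoint_eq, comp_assoc]

theorem interpolant_zero (hpA : IsPowerFamilyOf A pA) (hpW : IsPowerFamilyOf W pW) :
    interpolant V pA pW 0 = V := by
  rw [interpolant, hpA.map_zero, hpW.map_zero, Ring.inverse_one]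
  rfl

theorem continuousOn_interpolant (hpA : IsPowerFamilyOf A pA) (hpW : IsPowerFamilyOf W pW) :
    ContinuousOn (interpolant V pA pW) (Ici 0) :=
  hpA.continuousOn.clm_comp (continuousOn_const.clm_comp hpW.continuousOn_inverse)

theorem norm_interpolant_add_div_two_le_one (hpA : IsPowerFamilyOf A pA)
    (hpW : IsPowerFamilyOf W pW) {s t : ℝ} (hs : 0 ≤ s) (ht : 0 ≤ t)
    (hTs : ‖interpolant V pA pW s‖ ≤ 1) (hTt : ‖interpolant V pA pW t‖ ≤ 1) :
    ‖interpolant V pA pW ((s + t) / 2)‖ ≤ 1 := by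
  set m := (s + t) / 2
  have hm : 0 ≤ m := by positivity
  have hmm : m + m = s + t := by ring
  set X := Ring.inverse (pW m) ∘L adjoint V ∘L pA s
  set Y := pA t ∘L V ∘L Ring.inverse (pW m)
  have hXY : adjoint (interpolant V pA pW m) ∘L interpolant V pA pW m = X ∘L Y := by
    rw [adjoint_interpolant hpA hpW hm]
    ext x
    simp only [interpolant, X, Y, comp_apply]
    rw [← hpA.map_add_apply hm hm, hmm, hpA.map_add_apply hs ht]
  have hYX : Y ∘L X = interpolant V pA pW t ∘L adjoint (interpolant V pA pW s) := by
    rw [adjoint_interpolant hpA hpW hs]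
    ext x
    simp only [interpolant, X, Y, comp_apply]
    rw [← hpW.inverse_map_add_apply hm hm, hmm, add_comm, hpW.inverse_map_add_apply ht hs]
  refine norm_le_one_of_norm_adjoint_comp_self_le_one ?_
  rw [hXY]
  refine norm_comp_le_one_of_isSelfAdjoint ?_ ?_
  · rw [← hXY, IsSelfAdjoint, star_eq_adjoint, adjoint_comp, adjoint_adjoint]
  · rw [hYX]
    calc _ ≤ ‖interpolant V pA pW t‖ * ‖adjoint (interpolant V pA pW s)‖ := opNorm_comp_le _ _
      _ ≤ 1 := by rw [LinearIsometryEquiv.norm_map]; exact mul_le_one₀ hTt (norm_nonneg _) hTs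

theorem norm_interpolant_one_half_le_one (hpA : IsPowerFamilyOf A pA)
    (hpW : IsPowerFamilyOf (adjoint V ∘L A ∘L V) pW) :
    ‖interpolant V pA pW (1 / 2)‖ ≤ 1 := by
  have hhalf : (0 : ℝ) ≤ 1 / 2 := by norm_num
  have hid : adjoint (interpolant V pA pW (1 / 2)) ∘L interpolant V pA pW (1 / 2) = 1 := by
    rw [adjoint_interpolant hpA hpW hhalf]
    ext x
    simp only [interpolant, comp_apply, one_apply_eq_self]
    rw [hpA.map_one_half_apply_apply, ← comp_apply A, ← comp_apply (adjoint V),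
      ← hpW.map_one_half_apply_apply,
      hpW.apply_inverse_apply hhalf, hpW.inverse_apply_apply hhalf]
  exact norm_le_one_of_norm_adjoint_comp_self_le_one (hid ▸ norm_id_le)

theorem norm_interpolant_le_one (hV : V ∘L adjoint V ∘L V = V) (hpA : IsPowerFamilyOf A pA)
    (hpW : IsPowerFamilyOf (adjoint V ∘L A ∘L V) pW) {t : ℝ} (ht : t ∈ Icc (0 : ℝ) (1 / 2)) :
    ‖interpolant V pA pW t‖ ≤ 1 := by
  let S := Icc (0 : ℝ) (1 / 2) ∩ (fun t => ‖interpolant V pA pW t‖) ⁻¹' Iic 1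
  have hS : IsClosed S :=
    ((continuousOn_interpolant hpA hpW).norm.mono Icc_subset_Ici_self).preimage_isClosed_of_isClosed
      isClosed_Icc isClosed_Iic
  have h0 : (0 : ℝ) ∈ S := ⟨by norm_num, by
    simpa [interpolant_zero hpA hpW] using norm_le_one_of_comp_adjoint_comp_self hV⟩
  have hhalf : (1 / 2 : ℝ) ∈ S := ⟨by norm_num, norm_interpolant_one_half_le_one hpA hpW⟩
  refine (Icc_subset_of_isClosed_of_add_div_two_mem hS h0 hhalf ?_ ht).2
  rintro x ⟨⟨hx0, hx1⟩, hTx⟩ y ⟨⟨hy0, hy1⟩, hTy⟩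
  exact ⟨⟨by linarith, by linarith⟩, norm_interpolant_add_div_two_le_one hpA hpW hx0 hy0 hTx hTy⟩

theorem comp_eq_interpolant_comp_adjoint_interpolant (hpA : IsPowerFamilyOf A pA)
    (hpW : IsPowerFamilyOf W pW) {r s : ℝ} (hr : 0 ≤ r) (hs : 0 ≤ s) (B : K →L[ℝ] K) :
    pA r ∘L V ∘L B ∘L adjoint V ∘L pA s =
      interpolant V pA pW r ∘L (pW r ∘L B ∘L pW s) ∘L adjoint (interpolant V pA pW s) := by
  rw [adjoint_interpolant hpA hpW hs]
  ext x
  simp only [interpolant, comp_apply]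
  rw [hpW.apply_inverse_apply hs, hpW.inverse_apply_apply hr]

end Interpolation

theorem stmt0_general {H K : Type*} [NormedAddCommGroup H] [InnerProductSpace ℝ H] [CompleteSpace H]
    [NormedAddCommGroup K] [InnerProductSpace ℝ K] [CompleteSpace K]
    (A : H →L[ℝ] H)
    (V : K →L[ℝ] H) (hV : V ∘L (adjoint V) ∘L V = V)
    (B : K →L[ℝ] K)
    (pA : ℝ → H →L[ℝ] H) (hpA : IsPowerFamilyOf A pA)
    (pW : ℝ → K →L[ℝ] K) (hpW : IsPowerFamilyOf ((adjoint V) ∘L A ∘L V) pW)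
    (r s : ℝ) (hr0 : 0 ≤ r) (hr : r ≤ 1 / 2) (hs0 : 0 ≤ s) (hs : s ≤ 1 / 2) :
    ‖pA r ∘L V ∘L B ∘L (adjoint V) ∘L pA s‖ ≤ ‖pW r ∘L B ∘L pW s‖ := by
  have hTr := norm_interpolant_le_one hV hpA hpW ⟨hr0, hr⟩
  have hTs := norm_interpolant_le_one hV hpA hpW ⟨hs0, hs⟩
  rw [comp_eq_interpolant_comp_adjoint_interpolant hpA hpW hr0 hs0]
  calc _ ≤ ‖interpolant V pA pW r‖ * (‖pW r ∘L B ∘L pW s‖ * ‖adjoint (interpolant V pA pW s)‖) :=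
        (opNorm_comp_le _ _).trans (by gcongr; exact opNorm_comp_le _ _)
    _ ≤ 1 * (‖pW r ∘L B ∘L pW s‖ * 1) := by rw [LinearIsometryEquiv.norm_map]; gcongr
    _ = ‖pW r ∘L B ∘L pW s‖ := by ring

/-- For a positive operator `A` on a real separable Hilbert space `H`,
a partial isometry `V : K → H` and a bounded operator `B : K → K`, and exponents
`0 ≤ r, s ≤ 1/2`, one has `‖A^r V B V^* A^s‖ ≤ ‖(V^* A V)^r B (V^* A V)^s‖`. -/
theorem stmt0 {H K : Type*} [NormedAddCommGroup H] [InnerProductSpace ℝ H] [CompleteSpace H]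
    [TopologicalSpace.SeparableSpace H]
    [NormedAddCommGroup K] [InnerProductSpace ℝ K] [CompleteSpace K]
    [TopologicalSpace.SeparableSpace K]
    (A : H →L[ℝ] H) (hA : A.IsPositive)
    (V : K →L[ℝ] H) (hV : V ∘L (adjoint V) ∘L V = V)
    (B : K →L[ℝ] K)
    (pA : ℝ → H →L[ℝ] H) (hpA : IsPowerFamilyOf A pA)
    (pW : ℝ → K →L[ℝ] K) (hpW : IsPowerFamilyOf ((adjoint V) ∘L A ∘L V) pW)
    (r s : ℝ) (hr0 : 0 ≤ r) (hr : r ≤ 1 / 2) (hs0 : 0 ≤ s) (hs : s ≤ 1 / 2) :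
    ‖pA r ∘L V ∘L B ∘L (adjoint V) ∘L pA s‖ ≤ ‖pW r ∘L B ∘L pW s‖ :=
  stmt0_general A V hV B pA hpA pW hpW r s hr0 hr hs0 hs
end

section
/- Let A and B be positive definite symmetric real matrices of the same size and let 0 ≤ u ≤ 1. Then ‖A^u B^u‖ ≤ ‖A B‖^u, where ‖·‖ denotes the spectral (operator) norm and A^u, B^u are the matrix powers defined by the spectral decomposition (Cordes inequality). -/
/-!
For `c = (s + t) / 2`, `‖A^c B^c‖²` is the norm of the self-adjoint matrix `B^c A^(2c) B^c`, hence
the absolute value of one of its eigenvalues. Nonzero spectra are invariant under cyclic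
permutation of products, so this eigenvalue, if nonzero, is also one of `A^s A^t B^t B^s` and of
`(A^t B^t) (B^s A^s)`, whence `‖A^c B^c‖² ≤ ‖A^s B^s‖ ‖A^t B^t‖`. Thus `u ↦ log ‖A^u B^u‖` is
continuous and midpoint convex, hence convex; it vanishes at `u = 0` and equals `log ‖A B‖` at
`u = 1`.
-/
open scoped Matrix.Norms.L2Operator

/-- The real power `A ^ u` of a positive definite symmetric real matrix, defined through the
spectral decomposition `A = U diag(σᵢ) Uᵀ` by `A ^ u = U diag(σᵢ^u) Uᵀ`. -/
noncomputable def Matrix.IsHermitian.matrixRpow {n : Type*} [Fintype n] [DecidableEq n]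
    {A : Matrix n n ℝ} (hA : A.IsHermitian) (u : ℝ) : Matrix n n ℝ :=
  (hA.eigenvectorUnitary : Matrix n n ℝ) *
    Matrix.diagonal (fun i => hA.eigenvalues i ^ u) *
      (star (hA.eigenvectorUnitary : Matrix n n ℝ))

open Set

lemma nonpos_on_Icc_of_midpoint_le {g : ℝ → ℝ} (hg : ContinuousOn g (Icc 0 1))
    (h0 : g 0 ≤ 0) (h1 : g 1 ≤ 0)
    (hmid : ∀ s ∈ Icc (0 : ℝ) 1, ∀ t ∈ Icc (0 : ℝ) 1, 2 * g ((s + t) / 2) ≤ g s + g t)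
    {u : ℝ} (hu : u ∈ Icc (0 : ℝ) 1) : g u ≤ 0 := by
  obtain ⟨m, hm, hmax⟩ := isCompact_Icc.exists_isMaxOn (nonempty_Icc.2 zero_le_one) hg
  refine (hmax hu).trans (not_lt.1 fun hpos => ?_)
  -- the leftmost maximiser `p` violates midpoint convexity, since `g` is lower just left of `p`
  have hS : IsCompact (Icc 0 1 ∩ g ⁻¹' {g m}) := isCompact_Icc.of_isClosed_subset
    (hg.preimage_isClosed_of_isClosed isClosed_Icc isClosed_singleton) inter_subset_left
  obtain ⟨p, ⟨⟨hp0, hp1⟩, hgp : g p = g m⟩, hpmin⟩ :=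
    hS.exists_isMinOn ⟨m, hm, rfl⟩ continuousOn_id
  have hp0' : p ≠ 0 := by rintro rfl; linarith
  have hp1' : p ≠ 1 := by rintro rfl; linarith
  obtain ⟨h, hh, hhp, hhp'⟩ : ∃ h : ℝ, 0 < h ∧ h ≤ p ∧ h ≤ 1 - p :=
    ⟨min p (1 - p), lt_min (hp0.lt_of_ne' hp0') (by linarith [hp1.lt_of_ne hp1']),
      min_le_left _ _, min_le_right _ _⟩
  have hl : p - h ∈ Icc (0 : ℝ) 1 := ⟨by linarith, by linarith⟩
  have hr : p + h ∈ Icc (0 : ℝ) 1 := ⟨by linarith, by linarith⟩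
  have hgl : g (p - h) < g m := by
    refine (hmax hl).lt_of_ne fun heq => ?_
    have : p ≤ p - h := hpmin ⟨hl, heq⟩
    linarith
  have hgr : g (p + h) ≤ g m := hmax hr
  have := hmid _ hl _ hr
  rw [show (p - h + (p + h)) / 2 = p by ring, hgp] at this
  linarith

lemma le_rpow_mul_rpow_of_sq_midpoint_le {f : ℝ → ℝ} (hf : ContinuousOn f (Icc 0 1))
    (hpos : ∀ u ∈ Icc (0 : ℝ) 1, 0 < f u)
    (hmid : ∀ s ∈ Icc (0 : ℝ) 1, ∀ t ∈ Icc (0 : ℝ) 1, f ((s + t) / 2) ^ 2 ≤ f s * f t)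
    {u : ℝ} (hu : u ∈ Icc (0 : ℝ) 1) : f u ≤ f 0 ^ (1 - u) * f 1 ^ u := by
  have h0 := hpos 0 (left_mem_Icc.2 zero_le_one)
  have h1 := hpos 1 (right_mem_Icc.2 zero_le_one)
  set g : ℝ → ℝ := fun u => Real.log (f u) - ((1 - u) * Real.log (f 0) + u * Real.log (f 1))
  have hg : ContinuousOn g (Icc 0 1) :=
    (hf.log fun x hx => (hpos x hx).ne').sub (by fun_prop)
  have hgmid : ∀ s ∈ Icc (0 : ℝ) 1, ∀ t ∈ Icc (0 : ℝ) 1, 2 * g ((s + t) / 2) ≤ g s + g t := by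
    intro s hs t ht
    have hc : (s + t) / 2 ∈ Icc (0 : ℝ) 1 := ⟨by linarith [hs.1, ht.1], by linarith [hs.2, ht.2]⟩
    have := Real.log_le_log (pow_pos (hpos _ hc) 2) (hmid s hs t ht)
    rw [Real.log_pow, Real.log_mul (hpos s hs).ne' (hpos t ht).ne'] at this
    simp only [g]
    linarith
  have := nonpos_on_Icc_of_midpoint_le hg (by simp [g]) (by simp [g]) hgmid hu
  rw [← Real.log_le_log_iff (hpos u hu) (by positivity), Real.log_mul (by positivity)
    (by positivity), Real.log_rpow h0, Real.log_rpow h1]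
  linarith

namespace Matrix

variable {n : Type*} [Fintype n] [DecidableEq n]

lemma l2_opNorm_mul_sq_le_of_mul_self_eq {P Q P₁ P₂ Q₁ Q₂ : Matrix n n ℝ} (hP : P.IsHermitian)
    (hQ : Q.IsHermitian) (hP₁ : P₁.IsHermitian) (hQ₁ : Q₁.IsHermitian)
    (hPP : P * P = P₁ * P₂) (hQQ : Q * Q = Q₂ * Q₁) :
    ‖P * Q‖ ^ 2 ≤ ‖P₁ * Q₁‖ * ‖P₂ * Q₂‖ := by
  nontriviality Matrix n n ℝ
  obtain ⟨x, hx, hxM : ‖x‖ = _⟩ := (IsometricContinuousFunctionalCalculus.isGreatest_norm_spectrum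
    (𝕜 := ℝ) _ (IsSelfAdjoint.star_mul_self (P * Q))).1
  rw [sq, ← l2_opNorm_conjTranspose_mul_self, ← star_eq_conjTranspose, ← hxM]
  rcases eq_or_ne x 0 with rfl | hx0
  · rw [norm_zero]; positivity
  have hx' : x ∈ spectrum ℝ (P₂ * Q₂ * (Q₁ * P₁)) := by
    have hstar : star (P * Q) = Q * P := by
      rw [star_eq_conjTranspose, conjTranspose_mul, hP.eq, hQ.eq]
    have h : x ∈ spectrum ℝ (Q * (P * P * Q)) \ {0} := by
      refine ⟨?_, hx0⟩
      rwa [hstar, mul_assoc, ← mul_assoc P] at hx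
    rw [spectrum.nonzero_mul_comm, mul_assoc, hQQ, hPP, mul_assoc,
      spectrum.nonzero_mul_comm] at h
    simpa only [mul_assoc] using h.1
  have hQP : ‖Q₁ * P₁‖ = ‖P₁ * Q₁‖ := by
    rw [← l2_opNorm_conjTranspose, conjTranspose_mul, hP₁.eq, hQ₁.eq]
  calc ‖x‖ ≤ ‖P₂ * Q₂ * (Q₁ * P₁)‖ := spectrum.norm_le_norm_of_mem hx'
    _ ≤ ‖P₂ * Q₂‖ * ‖Q₁ * P₁‖ := l2_opNorm_mul _ _
    _ = ‖P₁ * Q₁‖ * ‖P₂ * Q₂‖ := by rw [hQP, mul_comm]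

variable {A B : Matrix n n ℝ}

namespace IsHermitian

lemma matrixRpow_isHermitian (hA : A.IsHermitian) (u : ℝ) :
    (hA.matrixRpow u).IsHermitian := by
  simp [IsHermitian, matrixRpow, star_eq_conjTranspose, mul_assoc]

lemma matrixRpow_zero (hA : A.IsHermitian) : hA.matrixRpow 0 = 1 := by
  simp [matrixRpow]

lemma matrixRpow_one (hA : A.IsHermitian) : hA.matrixRpow 1 = A := by
  conv_rhs => rw [hA.spectral_theorem]
  simp [matrixRpow, Unitary.conjStarAlgAut_apply]

lemma continuous_matrixRpow (hA : A.IsHermitian) (h : ∀ i, hA.eigenvalues i ≠ 0) :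
    Continuous hA.matrixRpow := by
  unfold matrixRpow
  fun_prop (disch := exact h _)

end IsHermitian

namespace PosDef

lemma matrixRpow_add (hA : A.PosDef) (u v : ℝ) :
    hA.1.matrixRpow (u + v) = hA.1.matrixRpow u * hA.1.matrixRpow v := by
  have hU : star (hA.1.eigenvectorUnitary : Matrix n n ℝ) * hA.1.eigenvectorUnitary = 1 :=
    Unitary.coe_star_mul_self _
  simp only [IsHermitian.matrixRpow, mul_assoc,
    ← mul_assoc _ (hA.1.eigenvectorUnitary : Matrix n n ℝ), hU, one_mul]
  rw [← mul_assoc (diagonal _), diagonal_mul_diagonal]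
  simp only [Real.rpow_add (hA.eigenvalues_pos _)]

lemma isUnit_matrixRpow (hA : A.PosDef) (u : ℝ) : IsUnit (hA.1.matrixRpow u) :=
  IsUnit.of_mul_eq_one (hA.1.matrixRpow (-u)) <| by
    rw [← hA.matrixRpow_add, add_neg_cancel, IsHermitian.matrixRpow_zero]

lemma norm_matrixRpow_mul_midpoint_sq_le (hA : A.PosDef) (hB : B.PosDef) (s t : ℝ) :
    ‖hA.1.matrixRpow ((s + t) / 2) * hB.1.matrixRpow ((s + t) / 2)‖ ^ 2 ≤
      ‖hA.1.matrixRpow s * hB.1.matrixRpow s‖ * ‖hA.1.matrixRpow t * hB.1.matrixRpow t‖ :=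
  l2_opNorm_mul_sq_le_of_mul_self_eq (hA.1.matrixRpow_isHermitian _) (hB.1.matrixRpow_isHermitian _)
    (hA.1.matrixRpow_isHermitian _) (hB.1.matrixRpow_isHermitian _)
    (by rw [← hA.matrixRpow_add, ← hA.matrixRpow_add, add_halves])
    (by rw [← hB.matrixRpow_add, ← hB.matrixRpow_add, add_halves, add_comm])

end PosDef

end Matrix

/-- **Cordes inequality.** For positive definite symmetric real matrices `A`, `B`
and `0 ≤ u ≤ 1`, one has `‖A^u B^u‖ ≤ ‖A B‖^u` in the spectral (L2 operator) norm. -/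
theorem stmt2 {n : Type*} [Fintype n] [DecidableEq n]
    {A B : Matrix n n ℝ} (hA : A.PosDef) (hB : B.PosDef)
    (u : ℝ) (hu0 : 0 ≤ u) (hu1 : u ≤ 1) :
    ‖hA.1.matrixRpow u * hB.1.matrixRpow u‖ ≤ ‖A * B‖ ^ u := by
  rcases isEmpty_or_nonempty n with hn | hn
  · rw [Subsingleton.elim (_ * _) 0, norm_zero]
    positivity
  have hpos (w : ℝ) : 0 < ‖hA.1.matrixRpow w * hB.1.matrixRpow w‖ :=
    norm_pos_iff.2 ((hA.isUnit_matrixRpow w).mul (hB.isUnit_matrixRpow w)).ne_zero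
  have hcont : Continuous fun w => ‖hA.1.matrixRpow w * hB.1.matrixRpow w‖ :=
    ((hA.1.continuous_matrixRpow fun i => (hA.eigenvalues_pos i).ne').mul
      (hB.1.continuous_matrixRpow fun i => (hB.eigenvalues_pos i).ne')).norm
  simpa [Matrix.IsHermitian.matrixRpow_zero, Matrix.IsHermitian.matrixRpow_one] using
    le_rpow_mul_rpow_of_sq_midpoint_le hcont.continuousOn (fun w _ => hpos w)
      (fun s _ t _ => hA.norm_matrixRpow_mul_midpoint_sq_le hB s t) ⟨hu0, hu1⟩
end

section
/- Let H be a real separable Hilbert space, f ∈ H, and let f_1, …, f_m and f⋄_1, …, f⋄_m be H-valued Bochner square-integrable random variables such that f_1, …, f_m are independent and E[f_j] = E[f⋄_j] for each j. Let w_1, …, w_m be nonnegative real numbers with Σ_{j=1}^m w_j = 1. Then E[‖Σ_{j=1}^m w_j f_j − f‖_H^2] ≤ Σ_{j=1}^m w_j^2 E[‖f_j − f‖_H^2] + Σ_{j=1}^m w_j E[‖f⋄_j − f‖_H^2]. (This is the abstract form of the error decomposition for distributed kernel ridge regression, where f_j is the local estimator, f⋄_j its noise-free version, f the regression function, and w_j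 = |D_j|/|D|.) -/
/-! Write `M_j = E[f_j]`. The bias–variance decomposition splits `E‖Σ w_j f_j − f‖²` into
`E‖Σ w_j (f_j − M_j)‖²` and `‖Σ w_j M_j − f‖²`. Independence makes the centred summands
orthogonal in `L²`, so the first term is `Σ w_j² E‖f_j − M_j‖² ≤ Σ w_j² E‖f_j − f‖²`.
Since `M_j = E[f⋄_j]`, convexity of `‖·‖²` bounds the second term by
`Σ w_j ‖E[f⋄_j] − f‖² ≤ Σ w_j E‖f⋄_j − f‖²`. -/

open MeasureTheory ProbabilityTheory
open scoped RealInnerProductSpace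

section

variable {E : Type*} [NormedAddCommGroup E] [InnerProductSpace ℝ E]
  {Ω : Type*} [MeasurableSpace Ω] {μ : Measure Ω}

theorem MeasureTheory.MemLp.integrable_inner {X Y : Ω → E} (hX : MemLp X 2 μ)
    (hY : MemLp Y 2 μ) : Integrable (fun ω ↦ ⟪X ω, Y ω⟫) μ :=
  memLp_one_iff_integrable.1 ((innerSL ℝ).memLp_of_bilin 1 hX hY)

theorem integral_norm_sum_smul_sq_of_orthogonal {ι : Type*} (s : Finset ι) {Y : ι → Ω → E}
    (hY : ∀ i, MemLp (Y i) 2 μ) (horth : ∀ i j, i ≠ j → ∫ ω, ⟪Y i ω, Y j ω⟫ ∂μ = 0)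
    (a : ι → ℝ) :
    ∫ ω, ‖∑ i ∈ s, a i • Y i ω‖ ^ 2 ∂μ = ∑ i ∈ s, a i ^ 2 * ∫ ω, ‖Y i ω‖ ^ 2 ∂μ := by
  have hinner i j : Integrable (fun ω ↦ a i * a j * ⟪Y i ω, Y j ω⟫) μ :=
    ((hY i).integrable_inner (hY j)).const_mul _
  have hexpand ω : ‖∑ i ∈ s, a i • Y i ω‖ ^ 2 =
      ∑ i ∈ s, ∑ j ∈ s, a i * a j * ⟪Y i ω, Y j ω⟫ := by
    simp_rw [← real_inner_self_eq_norm_sq, sum_inner, inner_sum, real_inner_smul_left,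
      real_inner_smul_right, mul_assoc]
  simp_rw [hexpand]
  rw [integral_finsetSum _ fun i _ ↦ integrable_finsetSum _ fun j _ ↦ hinner i j]
  refine Finset.sum_congr rfl fun i hi ↦ ?_
  rw [integral_finsetSum _ fun j _ ↦ hinner i j, Finset.sum_eq_single_of_mem i hi
    fun j _ hji ↦ by rw [integral_const_mul, horth i j hji.symm, mul_zero]]
  simp_rw [integral_const_mul, real_inner_self_eq_norm_sq, sq]

theorem norm_sum_smul_sub_sq_le {ι : Type*} {s : Finset ι} {w : ι → ℝ}
    (hw : ∀ i ∈ s, 0 ≤ w i) (hw1 : ∑ i ∈ s, w i = 1) (v : ι → E) (c : E) :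
    ‖∑ i ∈ s, w i • v i - c‖ ^ 2 ≤ ∑ i ∈ s, w i * ‖v i - c‖ ^ 2 := by
  have hconv : ConvexOn ℝ Set.univ (fun x : E ↦ ‖x‖ ^ 2) :=
    convexOn_univ_norm.pow (fun _ _ ↦ norm_nonneg _) 2
  have hshift : ∑ i ∈ s, w i • v i - c = ∑ i ∈ s, w i • (v i - c) := by
    simp_rw [smul_sub, Finset.sum_sub_distrib, ← Finset.sum_smul, hw1, one_smul]
  rw [hshift]
  exact hconv.map_sum_le hw hw1 fun _ _ ↦ Set.mem_univ _

variable [CompleteSpace E]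

theorem ProbabilityTheory.IndepFun.integral_inner [MeasurableSpace E] [BorelSpace E]
    {X Y : Ω → E} (hXY : IndepFun X Y μ) (hX : Integrable X μ) (hY : Integrable Y μ) :
    ∫ ω, ⟪X ω, Y ω⟫ ∂μ = ⟪∫ ω, X ω ∂μ, ∫ ω, Y ω ∂μ⟫ :=
  hXY.integral_bilin hX hY (innerSL ℝ)

variable [IsProbabilityMeasure μ]

theorem integral_sub_integral_eq_zero {X : Ω → E} (hX : Integrable X μ) :
    ∫ ω, (X ω - ∫ ω', X ω' ∂μ) ∂μ = 0 := by
  simp [integral_sub hX (integrable_const _)]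

theorem integral_norm_add_sq_of_integral_eq_zero {Y : Ω → E} (hY : MemLp Y 2 μ)
    (hY0 : ∫ ω, Y ω ∂μ = 0) (v : E) :
    ∫ ω, ‖Y ω + v‖ ^ 2 ∂μ = ∫ ω, ‖Y ω‖ ^ 2 ∂μ + ‖v‖ ^ 2 := by
  have hsq : Integrable (fun ω ↦ ‖Y ω‖ ^ 2) μ := hY.integrable_norm_pow two_ne_zero
  have hcross : Integrable (fun ω ↦ 2 * ⟪Y ω, v⟫) μ :=
    ((hY.integrable one_le_two).inner_const v).const_mul 2
  have hcross0 : ∫ ω, ⟪Y ω, v⟫ ∂μ = 0 := by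
    simp_rw [real_inner_comm v]
    rw [integral_inner (hY.integrable one_le_two), hY0, inner_zero_right]
  have hsum : Integrable (fun ω ↦ ‖Y ω‖ ^ 2 + 2 * ⟪Y ω, v⟫) μ := hsq.add hcross
  simp_rw [norm_add_sq_real]
  rw [integral_add hsum (integrable_const _), integral_add hsq hcross,
    integral_const_mul, hcross0]
  simp

theorem integral_norm_sub_sq_eq_add {X : Ω → E} (hX : MemLp X 2 μ) (c : E) :
    ∫ ω, ‖X ω - c‖ ^ 2 ∂μ =
      ∫ ω, ‖X ω - ∫ ω', X ω' ∂μ‖ ^ 2 ∂μ + ‖(∫ ω, X ω ∂μ) - c‖ ^ 2 := by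
  have hY : MemLp (fun ω ↦ X ω - ∫ ω', X ω' ∂μ) 2 μ := hX.sub (memLp_const _)
  rw [← integral_norm_add_sq_of_integral_eq_zero hY
    (integral_sub_integral_eq_zero (hX.integrable one_le_two))]
  simp_rw [sub_add_sub_cancel]

theorem integral_norm_sub_integral_sq_le {X : Ω → E} (hX : MemLp X 2 μ) (c : E) :
    ∫ ω, ‖X ω - ∫ ω', X ω' ∂μ‖ ^ 2 ∂μ ≤ ∫ ω, ‖X ω - c‖ ^ 2 ∂μ := by
  rw [integral_norm_sub_sq_eq_add hX c]
  exact le_add_of_nonneg_right (sq_nonneg _)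

theorem norm_integral_sub_sq_le {X : Ω → E} (hX : MemLp X 2 μ) (c : E) :
    ‖(∫ ω, X ω ∂μ) - c‖ ^ 2 ≤ ∫ ω, ‖X ω - c‖ ^ 2 ∂μ := by
  rw [integral_norm_sub_sq_eq_add hX c]
  exact le_add_of_nonneg_left (integral_nonneg fun _ ↦ sq_nonneg _)

theorem ProbabilityTheory.iIndepFun.integral_norm_sum_smul_sub_integral_sq
    [MeasurableSpace E] [BorelSpace E] {ι : Type*} (s : Finset ι) {X : ι → Ω → E}
    (hind : iIndepFun X μ) (hX : ∀ i, MemLp (X i) 2 μ) (a : ι → ℝ) :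
    ∫ ω, ‖∑ i ∈ s, a i • (X i ω - ∫ ω', X i ω' ∂μ)‖ ^ 2 ∂μ =
      ∑ i ∈ s, a i ^ 2 * ∫ ω, ‖X i ω - ∫ ω', X i ω' ∂μ‖ ^ 2 ∂μ := by
  set Y : ι → Ω → E := fun i ω ↦ X i ω - ∫ ω', X i ω' ∂μ
  have hY i : MemLp (Y i) 2 μ := (hX i).sub (memLp_const _)
  have hY0 i : ∫ ω, Y i ω ∂μ = 0 := integral_sub_integral_eq_zero ((hX i).integrable one_le_two)
  refine integral_norm_sum_smul_sq_of_orthogonal s hY (fun i j hij ↦ ?_) a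
  have hindY : IndepFun (Y i) (Y j) μ :=
    (hind.indepFun hij).comp (measurable_id.sub_const _) (measurable_id.sub_const _)
  rw [hindY.integral_inner ((hY i).integrable one_le_two) ((hY j).integrable one_le_two),
    hY0 i, inner_zero_left]

end

theorem stmt13_general {H : Type*} [NormedAddCommGroup H] [InnerProductSpace ℝ H] [CompleteSpace H]
    [MeasurableSpace H] [BorelSpace H]
    {Ω : Type*} [MeasurableSpace Ω] (μ : Measure Ω) [IsProbabilityMeasure μ]
    (m : ℕ) (f₀ : H) (f fd : Fin m → Ω → H)
    (hL2 : ∀ j, MemLp (f j) 2 μ) (hL2' : ∀ j, MemLp (fd j) 2 μ)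
    (hind : ProbabilityTheory.iIndepFun f μ)
    (hmean : ∀ j, ∫ ω, f j ω ∂μ = ∫ ω, fd j ω ∂μ)
    (w : Fin m → ℝ) (hw : ∀ j, 0 ≤ w j) (hw1 : ∑ j, w j = 1) :
    ∫ ω, ‖(∑ j, w j • f j ω) - f₀‖ ^ 2 ∂μ ≤
      ∑ j, (w j) ^ 2 * ∫ ω, ‖f j ω - f₀‖ ^ 2 ∂μ +
        ∑ j, w j * ∫ ω, ‖fd j ω - f₀‖ ^ 2 ∂μ := by
  have hsum : MemLp (fun ω ↦ ∑ j, w j • f j ω) 2 μ :=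
    memLp_finsetSum _ fun j _ ↦ (hL2 j).const_smul (w j)
  have hmean_sum : ∫ ω, ∑ j, w j • f j ω ∂μ = ∑ j, w j • ∫ ω, f j ω ∂μ := by
    have hint j : Integrable (fun ω ↦ w j • f j ω) μ := ((hL2 j).integrable one_le_two).smul _
    rw [integral_finsetSum _ fun j _ ↦ hint j]
    simp_rw [integral_smul]
  have hcentered ω : ∑ j, w j • f j ω - ∑ j, w j • ∫ ω', f j ω' ∂μ =
      ∑ j, w j • (f j ω - ∫ ω', f j ω' ∂μ) := by
    simp_rw [smul_sub, Finset.sum_sub_distrib]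
  rw [integral_norm_sub_sq_eq_add hsum f₀, hmean_sum]
  simp_rw [hcentered]
  rw [hind.integral_norm_sum_smul_sub_integral_sq _ hL2 w]
  refine add_le_add (Finset.sum_le_sum fun j _ ↦ ?_) ?_
  · exact mul_le_mul_of_nonneg_left (integral_norm_sub_integral_sq_le (hL2 j) f₀) (sq_nonneg _)
  · calc ‖∑ j, w j • ∫ ω, f j ω ∂μ - f₀‖ ^ 2
        ≤ ∑ j, w j * ‖(∫ ω, fd j ω ∂μ) - f₀‖ ^ 2 := by
          simp_rw [hmean]
          exact norm_sum_smul_sub_sq_le (fun j _ ↦ hw j) hw1 _ f₀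
      _ ≤ ∑ j, w j * ∫ ω, ‖fd j ω - f₀‖ ^ 2 ∂μ :=
          Finset.sum_le_sum fun j _ ↦
            mul_le_mul_of_nonneg_left (norm_integral_sub_sq_le (hL2' j) f₀) (hw j)

/-- **abstract error decomposition for distributed KRR.** For `f ∈ H`,
independent square-integrable random variables `f₁, …, f_m`, square-integrable random variables
`f⋄₁, …, f⋄_m` with `E[f_j] = E[f⋄_j]`, and nonnegative weights summing to one,
`E[‖Σ w_j f_j − f‖²] ≤ Σ w_j² E[‖f_j − f‖²] + Σ w_j E[‖f⋄_j − f‖²]`. -/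
theorem stmt13 {H : Type*} [NormedAddCommGroup H] [InnerProductSpace ℝ H] [CompleteSpace H]
    [TopologicalSpace.SeparableSpace H] [MeasurableSpace H] [BorelSpace H]
    {Ω : Type*} [MeasurableSpace Ω] (μ : Measure Ω) [IsProbabilityMeasure μ]
    (m : ℕ) (f₀ : H) (f fd : Fin m → Ω → H)
    (hL2 : ∀ j, MemLp (f j) 2 μ) (hL2' : ∀ j, MemLp (fd j) 2 μ)
    (hind : ProbabilityTheory.iIndepFun f μ)
    (hmean : ∀ j, ∫ ω, f j ω ∂μ = ∫ ω, fd j ω ∂μ)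
    (w : Fin m → ℝ) (hw : ∀ j, 0 ≤ w j) (hw1 : ∑ j, w j = 1) :
    ∫ ω, ‖(∑ j, w j • f j ω) - f₀‖ ^ 2 ∂μ ≤
      ∑ j, (w j) ^ 2 * ∫ ω, ‖f j ω - f₀‖ ^ 2 ∂μ +
        ∑ j, w j * ∫ ω, ‖fd j ω - f₀‖ ^ 2 ∂μ :=
  stmt13_general μ m f₀ f fd hL2 hL2' hind hmean w hw hw1
end
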